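/- Let n ≥ 1, M ≥ 1, block sizes N₁,…,N_M ≥ 1 with ∑_j N_j = N, and β₁,…,β_M ∈ ℂ. Let B be the N×N block-diagonal Jordan matrix with blocks J_{N_j}(β_j), indexed by pairs (j,ν) with 1 ≤ ν ≤ N_j. Let A(B) be the n×N matrix with entries A(B)_{a,(j,ν)} = C(n−a, ν−1) · β_j^{n−a−ν+1} when ν ≤ n−a+1 and 0 otherwise (1 ≤ a ≤ n). Let f ∈ ℂⁿ have entries f_a = δ_{a,1} and g ∈ ℂᴺ have entries g_{(j,ν)} = δ_{ν,1}. Then A(B)·B − Λ_nᵀ·A(B) = f·(gᵀ·Bⁿ), i.e. the matrix A(B)·B − Λ_nᵀ·A(B) has all rows zero except the first, which equals the row vector gᵀ·Bⁿ. -/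

import Mathlib

open Matrix BigOperators

/-- The `n × n` upper-triangular shift matrix `Λ_n`. -/
def shiftMat (n : ℕ) : Matrix (Fin n) (Fin n) ℂ :=
  Matrix.of fun a b => if (b : ℕ) = (a : ℕ) + 1 then 1 else 0

/-- The block-diagonal Jordan matrix with blocks `J_{sz j}(ev j)`. -/
def blockJordan {M : ℕ} (sz : Fin M → ℕ) (ev : Fin M → ℂ) :
    Matrix ((j : Fin M) × Fin (sz j)) ((j : Fin M) × Fin (sz j)) ℂ :=
  Matrix.of fun p q =>
    if p.1 = q.1 then
      (if (p.2 : ℕ) = (q.2 : ℕ) then ev p.1 else 0)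
        + (if (q.2 : ℕ) = (p.2 : ℕ) + 1 then 1 else 0)
    else 0

/-!
Write `w_m` for the row vector with entry `C(m, ν) β_j ^ (m - ν)` at `(j, ν)`. Pascal's rule
`C(m+1, ν) = C(m, ν) + C(m, ν-1)` says exactly that `w_m B = w_{m+1}`, and `w_0 = gᵀ`, so
`w_m = gᵀ Bᵐ`. Row `a` of `A(B)` is `w_{n-1-a}`, hence row `a` of `A(B) B` is `w_{n-a}`; left
multiplication by `Λ_nᵀ` shifts rows down by one, so row `a ≥ 1` of `Λ_nᵀ A(B)` is also
`w_{n-a}`. Only row `0` survives in the difference, and it is `w_n = gᵀ Bⁿ`.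
-/

theorem Nat.cast_choose_succ_succ_mul_pow {R : Type*} [CommSemiring R] (x : R) (m ν : ℕ) :
    ((m + 1).choose (ν + 1) : R) * x ^ (m + 1 - (ν + 1))
      = x * ((m.choose (ν + 1) : R) * x ^ (m - (ν + 1))) + (m.choose ν : R) * x ^ (m - ν) := by
  rw [Nat.choose_succ_succ', Nat.add_sub_add_right, Nat.cast_add]
  rcases le_or_gt (ν + 1) m with h | h
  · rw [show m - ν = m - (ν + 1) + 1 by omega, pow_succ]
    ring
  · simp [Nat.choose_eq_zero_of_lt h]

section BlockJordan

variable {M : ℕ} (sz : Fin M → ℕ) (ev : Fin M → ℂ)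

theorem vecMul_blockJordan_apply (v : (j : Fin M) × Fin (sz j) → ℂ) (j : Fin M) (ν : Fin (sz j)) :
    (v ᵥ* blockJordan sz ev) ⟨j, ν⟩
      = ev j * v ⟨j, ν⟩ + if h : (ν : ℕ) = 0 then 0 else v ⟨j, ⟨ν - 1, by omega⟩⟩ := by
  rw [vecMul, dotProduct, Fintype.sum_sigma, Finset.sum_eq_single j]
  · simp only [blockJordan, of_apply, if_true, mul_add, mul_ite, mul_zero, mul_one,
      Finset.sum_add_distrib, Fin.val_inj, Finset.sum_ite_eq', Finset.mem_univ]
    split_ifs with h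
    · rw [Finset.sum_eq_zero fun x _ => if_neg (by omega)]
      ring
    · rw [Finset.sum_eq_single ⟨ν - 1, by omega⟩
        (fun x _ hx => if_neg fun e => hx (Fin.ext (by simp; omega))) (by simp),
        if_pos (by simp; omega)]
      ring
  · intro i _ hi
    simp [blockJordan, hi]
  · simp

def pascalRow (m : ℕ) : (j : Fin M) × Fin (sz j) → ℂ :=
  fun q => (m.choose q.2 : ℂ) * ev q.1 ^ (m - q.2)

theorem pascalRow_zero : pascalRow sz ev 0 = fun q => if (q.2 : ℕ) = 0 then 1 else 0 := by
  ext q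
  by_cases h : (q.2 : ℕ) = 0
  · simp [pascalRow, h]
  · simp [pascalRow, h, Nat.choose_eq_zero_of_lt (Nat.pos_of_ne_zero h)]

theorem pascalRow_vecMul_blockJordan (m : ℕ) :
    pascalRow sz ev m ᵥ* blockJordan sz ev = pascalRow sz ev (m + 1) := by
  ext ⟨j, ν⟩
  rw [vecMul_blockJordan_apply]
  obtain ⟨_ | k, hk⟩ := ν
  · simp [pascalRow, pow_succ, mul_comm]
  · simp only [pascalRow, Nat.add_sub_cancel, dif_neg (Nat.succ_ne_zero k)]
    rw [Nat.cast_choose_succ_succ_mul_pow]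

theorem pascalRow_zero_vecMul_pow (k : ℕ) :
    pascalRow sz ev 0 ᵥ* blockJordan sz ev ^ k = pascalRow sz ev k := by
  induction k with
  | zero => simp
  | succ k ih => rw [pow_succ, ← vecMul_vecMul, ih, pascalRow_vecMul_blockJordan]

end BlockJordan

theorem shiftMat_transpose_mul_apply {κ : Type*} {n : ℕ} (A : Matrix (Fin n) κ ℂ) (a : Fin n) :
    ((shiftMat n)ᵀ * A) a = if h : (a : ℕ) = 0 then 0 else A ⟨a - 1, by omega⟩ := by
  ext q
  simp only [mul_apply, transpose_apply, shiftMat, of_apply, ite_mul, one_mul, zero_mul]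
  split_ifs with h
  · exact Finset.sum_eq_zero fun b _ => if_neg (by omega)
  · rw [Finset.sum_eq_single ⟨a - 1, by omega⟩
      (fun b _ hb => if_neg fun e => hb (Fin.ext (by simp; omega))) (by simp),
      if_pos (by simp; omega)]

theorem stmt11_general (n M : ℕ)
    (Nsz : Fin M → ℕ) (β : Fin M → ℂ)
    (AB : Matrix (Fin n) ((j : Fin M) × Fin (Nsz j)) ℂ)
    (hAB : AB = Matrix.of fun (a : Fin n) (q : (j : Fin M) × Fin (Nsz j)) =>
      if (q.2 : ℕ) ≤ n - 1 - (a : ℕ) then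
        (Nat.choose (n - 1 - (a : ℕ)) (q.2 : ℕ) : ℂ)
          * β q.1 ^ (n - 1 - (a : ℕ) - (q.2 : ℕ))
      else 0) :
    AB * blockJordan Nsz β - (shiftMat n)ᵀ * AB
      = Matrix.vecMulVec (fun (a : Fin n) => if (a : ℕ) = 0 then (1 : ℂ) else 0)
          (Matrix.vecMul
            (fun q : (j : Fin M) × Fin (Nsz j) => if (q.2 : ℕ) = 0 then (1 : ℂ) else 0)
            (blockJordan Nsz β ^ n)) := by
  have row_AB (a : Fin n) : AB a = pascalRow Nsz β (n - 1 - a) := by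
    ext q
    -- the guard is redundant: `C(m, ν) = 0` for `ν > m`
    rw [hAB, of_apply, pascalRow, ite_eq_left_iff]
    intro h
    rw [Nat.choose_eq_zero_of_lt (not_le.mp h), Nat.cast_zero, zero_mul]
  ext a q
  rw [Matrix.sub_apply, mul_apply_eq_vecMul, row_AB, pascalRow_vecMul_blockJordan,
    shiftMat_transpose_mul_apply, vecMulVec_apply, ← pascalRow_zero, pascalRow_zero_vecMul_pow]
  by_cases ha : (a : ℕ) = 0
  · rw [dif_pos ha, if_pos ha, ha, Nat.sub_zero, Nat.sub_add_cancel (by omega)]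
    simp
  · rw [dif_neg ha, if_neg ha, row_AB, show n - 1 - (a - 1 : ℕ) = n - 1 - a + 1 by omega]
    simp

/-- With `B` the block-diagonal Jordan matrix with blocks `J_{N_j}(β_j)` and
`A(B)_{a,(j,ν)} = C(n−a, ν−1)·β_j^{n−a−ν+1}` when `ν ≤ n−a+1`, else `0` (`1`-based; here
`0`-based: `C(n−1−a, ν)·β_j^{n−1−a−ν}` when `ν ≤ n−1−a`), `f_a = δ_{a,1}`,
`g_{(j,ν)} = δ_{ν,1}`: `A(B)·B − Λ_nᵀ·A(B) = f·(gᵀ·Bⁿ)`. -/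
theorem stmt11 (n M : ℕ) (hn : 0 < n) (hM : 0 < M)
    (Nsz : Fin M → ℕ) (hNsz : ∀ j, 1 ≤ Nsz j) (β : Fin M → ℂ)
    (AB : Matrix (Fin n) ((j : Fin M) × Fin (Nsz j)) ℂ)
    (hAB : AB = Matrix.of fun (a : Fin n) (q : (j : Fin M) × Fin (Nsz j)) =>
      if (q.2 : ℕ) ≤ n - 1 - (a : ℕ) then
        (Nat.choose (n - 1 - (a : ℕ)) (q.2 : ℕ) : ℂ)
          * β q.1 ^ (n - 1 - (a : ℕ) - (q.2 : ℕ))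
      else 0) :
    AB * blockJordan Nsz β - (shiftMat n)ᵀ * AB
      = Matrix.vecMulVec (fun (a : Fin n) => if (a : ℕ) = 0 then (1 : ℂ) else 0)
          (Matrix.vecMul
            (fun q : (j : Fin M) × Fin (Nsz j) => if (q.2 : ℕ) = 0 then (1 : ℂ) else 0)
            (blockJordan Nsz β ^ n)) :=
  stmt11_general n M Nsz β AB hAB
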